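/- Let n and r be integers with 0 ≤ r ≤ n. Every nonzero function g ∈ RM(n,r) has weight wt(g) ≥ 2^{n−r}; that is, the minimum distance of the Reed–Muller code RM(n,r) is at least 2^{n−r}. -/
import Mathlib


/-- Boolean functions on `𝔽₂ⁿ`, identified with binary words of length `2^n`. -/
abbrev BF (n : ℕ) := (Fin n → ZMod 2) → ZMod 2

/-- The Reed–Muller code `RM(n,r)`: Boolean functions on `𝔽₂ⁿ` that are evaluations
of polynomials in `n` variables over `𝔽₂` of total degree at most `r`. -/
def RM (n r : ℕ) : Set (BF n) :=
  {f | ∃ p : MvPolynomial (Fin n) (ZMod 2),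
    p.totalDegree ≤ r ∧ ∀ x, MvPolynomial.eval x p = f x}

open MvPolynomial Finset

lemma zmod2_cases (a : ZMod 2) : a = 0 ∨ a = 1 := by revert a; decide

/-- Splitting the Hamming weight according to the first coordinate. -/
lemma wt_cons {n : ℕ} (g : BF (n + 1)) :
    hammingNorm g =
      hammingNorm (fun x => g (Fin.cons 0 x)) + hammingNorm (fun x => g (Fin.cons 1 x)) := by
  simp only [hammingNorm, Finset.card_filter]
  rw [← Fintype.sum_equiv (Fin.consEquiv fun _ => ZMod 2)
      (fun p : ZMod 2 × (Fin n → ZMod 2) => if g (Fin.cons p.1 p.2) ≠ 0 then 1 else 0)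
      (fun y => if g y ≠ 0 then 1 else 0) (fun p => rfl)]
  rw [Fintype.sum_prod_type]
  have huniv : (Finset.univ : Finset (ZMod 2)) = {0, 1} := by decide
  rw [huniv, Finset.sum_insert (by decide), Finset.sum_singleton]

/-- The `r = 0` case: nonzero constant functions have full weight. -/
lemma RM_zero_case {n : ℕ} (g : BF n) (hg : g ∈ RM n 0) (hg0 : g ≠ 0) :
    2 ^ n ≤ hammingNorm g := by
  obtain ⟨p, hp, hpe⟩ := hg
  have hdeg : p.totalDegree = 0 := Nat.le_zero.mp hp
  have hconst : ∀ x y : Fin n → ZMod 2, eval x p = eval y p := by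
    intro x y
    rw [eval_eq, eval_eq]
    refine Finset.sum_congr rfl fun m hm => ?_
    have hm0 := (totalDegree_eq_zero_iff _ p).mp hdeg m hm
    congr 1
    exact Finset.prod_congr rfl fun i _ => by rw [hm0 i]; simp
  have hne : ∀ x, g x ≠ 0 := by
    intro x hx
    apply hg0
    funext y
    have h1 : g y = g x := by rw [← hpe y, ← hpe x, hconst y x]
    rw [h1, hx]; rfl
  have hcard : hammingNorm g = Fintype.card (Fin n → ZMod 2) := by
    unfold hammingNorm
    rw [← Finset.card_univ]
    congr 1
    exact Finset.filter_true_of_mem (fun x _ => hne x)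
  rw [hcard, Fintype.card_fun, ZMod.card, Fintype.card_fin]

/-- Key induction: minimum distance of Reed-Muller codes. -/
lemma RM_key : ∀ n r : ℕ, r ≤ n → ∀ g : BF n, g ∈ RM n r → g ≠ 0 →
    2 ^ (n - r) ≤ hammingNorm g := by
  intro n
  induction n with
  | zero =>
    intro r hr g hg hg0
    have : r = 0 := Nat.le_zero.mp hr
    subst this
    exact RM_zero_case g hg hg0
  | succ n ih =>
    intro r hr g hg hg0
    -- r = 0 : constant case
    rcases Nat.eq_zero_or_pos r with rfl | hr1
    · simpa using RM_zero_case g hg hg0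
    -- r = n + 1 : trivial case
    rcases eq_or_lt_of_le hr with rfl | hrn
    · simp only [Nat.sub_self, pow_zero]
      rw [Nat.one_le_iff_ne_zero]
      intro h
      exact hg0 (hammingNorm_eq_zero.mp h)
    have hrn' : r ≤ n := Nat.lt_succ_iff.mp hrn
    -- decompose the polynomial
    obtain ⟨p, hp, hpe⟩ := hg
    set P := finSuccEquiv (ZMod 2) n p with hP
    set q₀ : MvPolynomial (Fin n) (ZMod 2) := P.coeff 0 with hq₀def
    set q₁ : MvPolynomial (Fin n) (ZMod 2) := ∑ i ∈ range P.natDegree, P.coeff (i + 1)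
      with hq₁def
    have hsum : P.eval 1 = q₀ + q₁ := by
      rw [Polynomial.eval_eq_sum_range' (Nat.lt_succ_self _) (1 : MvPolynomial (Fin n) (ZMod 2))]
      simp only [one_pow, mul_one]
      rw [Finset.sum_range_succ', add_comm]
    -- degree bounds
    have hq₀ : q₀.totalDegree ≤ r := by
      by_cases h : q₀ = 0
      · rw [h, totalDegree_zero]; exact Nat.zero_le _
      · have h2 := totalDegree_coeff_finSuccEquiv_add_le p 0 h
        rw [← hP] at h2
        rw [hq₀def]
        omega
    have hq₁ : q₁.totalDegree ≤ r - 1 := by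
      refine le_trans (totalDegree_finset_sum _ _) (Finset.sup_le fun i _ => ?_)
      by_cases h : P.coeff (i + 1) = 0
      · rw [h, totalDegree_zero]; exact Nat.zero_le _
      · have h2 := totalDegree_coeff_finSuccEquiv_add_le p (i + 1) h
        rw [← hP] at h2
        omega
    have hqs : (q₀ + q₁).totalDegree ≤ r :=
      le_trans (totalDegree_add _ _) (max_le hq₀ (le_trans hq₁ (Nat.sub_le r 1)))
    -- evaluations
    have heval0 : ∀ x, eval x q₀ = g (Fin.cons 0 x) := by
      intro x
      rw [← hpe (Fin.cons 0 x), eval_eq_eval_mv_eval', ← Polynomial.coeff_zero_eq_eval_zero,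
        Polynomial.coeff_map]
    have heval1 : ∀ x, eval x (q₀ + q₁) = g (Fin.cons 1 x) := by
      intro x
      rw [← hsum, ← hpe (Fin.cons 1 x), eval_eq_eval_mv_eval', Polynomial.eval_one_map]
    have hmem0 : (fun x => g (Fin.cons 0 x)) ∈ RM n r := ⟨q₀, hq₀, heval0⟩
    have hmem1 : (fun x => g (Fin.cons 1 x)) ∈ RM n r := ⟨q₀ + q₁, hqs, heval1⟩
    have hor : (fun x => g (Fin.cons 0 x)) ≠ 0 ∨ (fun x => g (Fin.cons 1 x)) ≠ 0 := by
      by_contra h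
      push_neg at h
      apply hg0
      funext y
      show g y = 0
      have hy : Fin.cons (y 0) (Fin.tail y) = y := Fin.cons_self_tail y
      rcases zmod2_cases (y 0) with h0 | h0
      · rw [← hy, h0]
        simpa using congrFun h.1 (Fin.tail y)
      · rw [← hy, h0]
        simpa using congrFun h.2 (Fin.tail y)
    by_cases h0 : (fun x => g (Fin.cons 0 x)) = 0
    · have h1 : (fun x => g (Fin.cons 1 x)) ≠ 0 := hor.resolve_left (not_not.mpr h0)
      have hmem1' : (fun x => g (Fin.cons 1 x)) ∈ RM n (r - 1) := by
        refine ⟨q₁, hq₁, fun x => ?_⟩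
        have hz : eval x q₀ = 0 := by
          rw [heval0 x]; exact congrFun h0 x
        have h3 := heval1 x
        rw [map_add, hz, zero_add] at h3
        exact h3
      have hIH := ih (r - 1) (by omega) _ hmem1' h1
      rw [show n - (r - 1) = n + 1 - r by omega] at hIH
      rw [wt_cons g]
      exact le_trans hIH (Nat.le_add_left _ _)
    · by_cases h1 : (fun x => g (Fin.cons 1 x)) = 0
      · have hmem0' : (fun x => g (Fin.cons 0 x)) ∈ RM n (r - 1) := by
          refine ⟨q₁, hq₁, fun x => ?_⟩
          have hz : eval x q₀ + eval x q₁ = 0 := by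
            rw [← map_add, heval1 x]; exact congrFun h1 x
          have h3 : eval x q₁ = eval x q₀ := by
            revert hz
            rcases zmod2_cases (eval x q₀) with ha | ha <;>
              rcases zmod2_cases (eval x q₁) with hb | hb <;> rw [ha, hb] <;> decide
          rw [h3, heval0 x]
        have hIH := ih (r - 1) (by omega) _ hmem0' h0
        rw [show n - (r - 1) = n + 1 - r by omega] at hIH
        rw [wt_cons g]
        exact le_trans hIH (Nat.le_add_right _ _)
      · have hIH0 := ih r hrn' _ hmem0 h0
        have hIH1 := ih r hrn' _ hmem1 h1
        rw [wt_cons g]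
        have hpow : 2 ^ (n + 1 - r) = 2 ^ (n - r) + 2 ^ (n - r) := by
          rw [show n + 1 - r = (n - r) + 1 by omega, pow_succ]
          ring
        rw [hpow]
        exact Nat.add_le_add hIH0 hIH1

theorem stmt16 (n r : ℕ) (hrn : r ≤ n) (g : BF n) (hg : g ∈ RM n r) (hg0 : g ≠ 0) :
    2 ^ (n - r) ≤ hammingNorm g := by
  exact RM_key n r hrn g hg hg0
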